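/- Let d = pⁿ with p prime and n ≥ 2, and let B₀, …, B_p be p+1 pairwise mutually unbiased orthonormal product bases of (ℂ^p)^{⊗n} such that, for each bipartition into the r-th factor ℂ^p and the remaining factors ℂ^{p^{n−1}}, each basis B_b has the form {v ⊗ w(v, v̄)} with {v} ranging over an orthonormal basis of the r-th factor ℂ^p and, for each v, {w(v, v̄)} an orthonormal basis of ℂ^{p^{n−1}}. If a unit vector μ ∈ (ℂ^p)^{⊗n} is mutually unbiased to every B_b, then μ is maximally entangled across every bipartition ℂ^p ⊗ ℂ^{p^{n−1}}: for each r = 1…n, the partial trace of |μ⟩⟨μ| over all factors except the r-th equals (1/p)·𝟙 on ℂ^p. -/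

import Mathlib

open scoped ComplexInnerProductSpace

/-- The tensor product `ψ¹ ⊗ ⋯ ⊗ ψⁿ` of `n` vectors, realized concretely on
`EuclideanSpace`: its component at the multi-index `f` is `∏ r, ψ r (f r)`. -/
noncomputable def eprodPi {n : ℕ} {D : Fin n → ℕ}
    (ψ : (r : Fin n) → EuclideanSpace ℂ (Fin (D r))) :
    EuclideanSpace ℂ ((r : Fin n) → Fin (D r)) :=
  WithLp.toLp 2 (fun f => ∏ r, ψ r (f r))

/-- The tensor product of a vector in the `r`-th factor `ℂ^p` with a vector in the
remaining factors, realized concretely on `(ℂ^p)^{⊗n}`. -/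
noncomputable def tensAt {n p : ℕ} (r : Fin n) (x : EuclideanSpace ℂ (Fin p))
    (y : EuclideanSpace ℂ ({s : Fin n // s ≠ r} → Fin p)) :
    EuclideanSpace ℂ (Fin n → Fin p) :=
  WithLp.toLp 2 (fun f => x (f r) * y (fun s => f s.1))

/-- The multi-index of `(ℂ^p)^{⊗n}` obtained by assigning `i` at the `r`-th factor and
`g` elsewhere. -/
def extendAt {n p : ℕ} (r : Fin n) (i : Fin p)
    (g : {s : Fin n // s ≠ r} → Fin p) : Fin n → Fin p :=
  fun s => if h : s = r then i else g ⟨s, h⟩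

/-- The reduced density matrix of the pure state `μ` of `(ℂ^p)^{⊗n}` on the `r`-th
factor, i.e. the partial trace of the projector `|μ⟩⟨μ|` over all factors except the
`r`-th. -/
noncomputable def reducedDensityMatrixAt {n p : ℕ} (r : Fin n)
    (μ : EuclideanSpace ℂ (Fin n → Fin p)) : Matrix (Fin p) (Fin p) ℂ :=
  Matrix.of fun i j => ∑ g : {s : Fin n // s ≠ r} → Fin p,
    μ (extendAt r i g) * star (μ (extendAt r j g))

/-! Fix a factor `r`. Writing each basis `B_b` as `{v_b x ⊗ w_b(x, g)}`, Parseval over the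
orthonormal basis `w_b(x, ·)` turns the unbiasedness of `μ` into `⟨v_b x| ρ |v_b x⟩ = p^{n-1}/p^n
= 1/p` for the reduced state `ρ` on factor `r`, and turns the mutual unbiasedness of `B_b, B_b'`
into that of the local bases `v_b, v_b'`. So `ρ` and `𝟙/p` have the same expectation values on
`p + 1` mutually unbiased bases of `ℂ^p`, whose projectors span all `p × p` matrices. -/

open Module Matrix ComplexConjugate

section Gram

variable {𝕜 E : Type*} [RCLike 𝕜] [NormedAddCommGroup E] [InnerProductSpace 𝕜 E]

theorem Orthonormal.sum_sq_norm_inner_right [FiniteDimensional 𝕜 E] {ι : Type*} [Fintype ι]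
    {w : ι → E} (hw : Orthonormal 𝕜 w) (hcard : Fintype.card ι = finrank 𝕜 E) (x : E) :
    ∑ i, ‖inner 𝕜 (w i) x‖ ^ 2 = ‖x‖ ^ 2 := by
  simpa using (OrthonormalBasis.mk hw
    (hw.linearIndependent.span_eq_top_of_card_eq_finrank' hcard).ge).sum_sq_norm_inner_right x

-- `P (b+1) (z+1) - P (b+1) 0` is dual to this family, which isolates the coefficients of the
-- second summand; the first summand is then orthonormal.
theorem linearIndependent_sumElim_of_gram {q : ℕ} {P : Fin (q + 2) → Fin (q + 1) → E} {t : 𝕜}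
    (hP : ∀ b, Orthonormal 𝕜 (P b))
    (hcross : ∀ b b', b ≠ b' → ∀ x x', inner 𝕜 (P b x) (P b' x') = t) :
    LinearIndependent 𝕜 (Sum.elim (P 0) fun bx : Fin (q + 1) × Fin q => P bx.1.succ bx.2.succ) := by
  set Q := Sum.elim (P 0) fun bx : Fin (q + 1) × Fin q => P bx.1.succ bx.2.succ
  have hdual : ∀ β z i, inner 𝕜 (P β.succ z.succ - P β.succ 0) (Q i) =
      if i = Sum.inr (β, z) then 1 else 0 := by
    rintro β z (x | ⟨b, y⟩)
    · simp [Q, inner_sub_left, hcross _ _ (Fin.succ_ne_zero β)]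
    · by_cases hb : b = β
      · subst hb
        simp [Q, inner_sub_left, orthonormal_iff_ite.mp (hP _), eq_comm]
      · have hb' : β.succ ≠ b.succ := fun h => hb (Fin.succ_inj.mp h).symm
        simp [Q, inner_sub_left, hcross _ _ hb', hb]
  rw [Fintype.linearIndependent_iff]
  intro c hc
  have hinr : ∀ β z, c (Sum.inr (β, z)) = 0 := fun β z => by
    have h := congrArg (inner 𝕜 (P β.succ z.succ - P β.succ 0)) hc
    simpa only [inner_sum, inner_smul_right, hdual, mul_ite, mul_one, mul_zero,
      Finset.sum_ite_eq', Finset.mem_univ, if_true, inner_zero_right] using h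
  have hinl : ∑ x, c (Sum.inl x) • P 0 x = 0 := by
    simpa [Q, Fintype.sum_sum_type, hinr] using hc
  rintro (x | ⟨β, z⟩)
  · exact Fintype.linearIndependent_iff.mp (hP 0).linearIndependent _ hinl x
  · exact hinr β z

theorem eq_zero_of_forall_inner_eq_zero_of_gram [FiniteDimensional 𝕜 E] {p : ℕ}
    (hdim : finrank 𝕜 E = p * p) {P : Fin (p + 1) → Fin p → E} {t : 𝕜}
    (hP : ∀ b, Orthonormal 𝕜 (P b))
    (hcross : ∀ b b', b ≠ b' → ∀ x x', inner 𝕜 (P b x) (P b' x') = t)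
    {A : E} (hA : ∀ b x, inner 𝕜 (P b x) A = 0) : A = 0 := by
  rcases p with _ | q
  · exact finrank_zero_iff_forall_zero.mp hdim A
  · let B := basisOfLinearIndependentOfCardEqFinrank (linearIndependent_sumElim_of_gram hP hcross)
      (by simp [hdim]; ring)
    exact InnerProductSpace.ext_inner_left_basis B fun i => by cases i <;> simp [B, hA]

end Gram

section MutuallyUnbiased

variable {𝕜 : Type*} [RCLike 𝕜] {ι : Type*} [Fintype ι]

/-- The projector `|u⟩⟨u|`, as a vector of the Hilbert–Schmidt space. -/
noncomputable def rankOneVec (u : EuclideanSpace 𝕜 ι) : EuclideanSpace 𝕜 (ι × ι) :=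
  WithLp.toLp 2 fun ij => u ij.1 * conj (u ij.2)

theorem inner_rankOneVec_rankOneVec (u u' : EuclideanSpace 𝕜 ι) :
    inner 𝕜 (rankOneVec u) (rankOneVec u') = (‖inner 𝕜 u u'‖ ^ 2 : ℝ) := by
  rw [RCLike.ofReal_pow, ← RCLike.mul_conj]
  simp only [rankOneVec, PiLp.inner_apply, RCLike.inner_apply, Fintype.sum_prod_type,
    map_sum, map_mul, RCLike.conj_conj, Finset.sum_mul_sum]
  exact Finset.sum_congr rfl fun i _ => Finset.sum_congr rfl fun j _ => by ring

theorem inner_rankOneVec_toLp (u : EuclideanSpace 𝕜 ι) (A : Matrix ι ι 𝕜) :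
    inner 𝕜 (rankOneVec u) (WithLp.toLp 2 fun ij => A ij.1 ij.2) = star ⇑u ⬝ᵥ A *ᵥ ⇑u := by
  simp only [rankOneVec, PiLp.inner_apply, RCLike.inner_apply, Fintype.sum_prod_type,
    map_mul, RCLike.conj_conj, dotProduct, mulVec, Finset.mul_sum, Pi.star_apply,
    RCLike.star_def]
  exact Finset.sum_congr rfl fun i _ => Finset.sum_congr rfl fun j _ => by ring

-- The `p (p + 1)` projectors onto the vectors of the bases span all `p × p` matrices.
theorem Matrix.eq_of_quadForm_eq_on_mutuallyUnbiased {p : ℕ}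
    {v : Fin (p + 1) → Fin p → EuclideanSpace 𝕜 (Fin p)} (hv : ∀ b, Orthonormal 𝕜 (v b))
    (hMU : ∀ b b', b ≠ b' → ∀ x x', ‖inner 𝕜 (v b x) (v b' x')‖ ^ 2 = 1 / p)
    {M N : Matrix (Fin p) (Fin p) 𝕜}
    (h : ∀ b x, star ⇑(v b x) ⬝ᵥ M *ᵥ ⇑(v b x) = star ⇑(v b x) ⬝ᵥ N *ᵥ ⇑(v b x)) :
    M = N := by
  have hP : ∀ b, Orthonormal 𝕜 fun x => rankOneVec (v b x) := fun b => by
    refine orthonormal_iff_ite.mpr fun x x' => ?_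
    rw [inner_rankOneVec_rankOneVec, orthonormal_iff_ite.mp (hv b)]
    split_ifs <;> simp
  have hzero := eq_zero_of_forall_inner_eq_zero_of_gram (by simp) hP
    (fun b b' hb x x' => by rw [inner_rankOneVec_rankOneVec, hMU b b' hb])
    (A := WithLp.toLp 2 fun ij => (M - N) ij.1 ij.2)
    (fun b x => by rw [inner_rankOneVec_toLp, sub_mulVec, dotProduct_sub, h, sub_self])
  ext i j
  simpa [sub_eq_zero] using congrArg (· (i, j)) hzero

end MutuallyUnbiased

section Bipartition

variable {n p : ℕ} (r : Fin n)

theorem funSplitAt_symm_eq_extendAt (i : Fin p) (g : {s : Fin n // s ≠ r} → Fin p) :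
    (Equiv.funSplitAt r (Fin p)).symm (i, g) = extendAt r i g := by
  funext s
  by_cases hs : s = r
  · subst hs; simp [extendAt, Equiv.funSplitAt, Equiv.piSplitAt]
  · simp [extendAt, Equiv.funSplitAt, Equiv.piSplitAt, hs]

theorem sum_eq_sum_extendAt {M : Type*} [AddCommMonoid M] (F : (Fin n → Fin p) → M) :
    ∑ f, F f = ∑ i, ∑ g, F (extendAt r i g) := by
  rw [← (Equiv.funSplitAt r (Fin p)).symm.sum_comp, Fintype.sum_prod_type]
  simp only [funSplitAt_symm_eq_extendAt]

theorem tensAt_extendAt (x : EuclideanSpace ℂ (Fin p))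
    (y : EuclideanSpace ℂ ({s : Fin n // s ≠ r} → Fin p)) (i : Fin p)
    (g : {s : Fin n // s ≠ r} → Fin p) :
    tensAt r x y (extendAt r i g) = x i * y g := by
  have hrest : (fun s : {s : Fin n // s ≠ r} => extendAt r i g s.1) = g := by
    funext s; simp [extendAt, s.2]
  show x (extendAt r i g r) * y (fun s => extendAt r i g s.1) = x i * y g
  rw [hrest]
  simp [extendAt]

theorem inner_tensAt_tensAt (x x' : EuclideanSpace ℂ (Fin p))
    (y y' : EuclideanSpace ℂ ({s : Fin n // s ≠ r} → Fin p)) :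
    ⟪tensAt r x y, tensAt r x' y'⟫ = ⟪x, x'⟫ * ⟪y, y'⟫ := by
  simp only [PiLp.inner_apply, RCLike.inner_apply, sum_eq_sum_extendAt r, tensAt_extendAt,
    Finset.sum_mul_sum, map_mul]
  exact Finset.sum_congr rfl fun i _ => Finset.sum_congr rfl fun g _ => by ring

/-- The partial inner product `(⟨u| ⊗ 𝟙) μ` of `μ` with `u` in the `r`-th factor. -/
noncomputable def contractAt (u : EuclideanSpace ℂ (Fin p))
    (μ : EuclideanSpace ℂ (Fin n → Fin p)) : EuclideanSpace ℂ ({s : Fin n // s ≠ r} → Fin p) :=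
  WithLp.toLp 2 fun g => ∑ i, conj (u i) * μ (extendAt r i g)

theorem inner_tensAt_left (u : EuclideanSpace ℂ (Fin p))
    (y : EuclideanSpace ℂ ({s : Fin n // s ≠ r} → Fin p)) (μ : EuclideanSpace ℂ (Fin n → Fin p)) :
    ⟪tensAt r u y, μ⟫ = ⟪y, contractAt r u μ⟫ := by
  simp only [PiLp.inner_apply, RCLike.inner_apply, sum_eq_sum_extendAt r, tensAt_extendAt,
    contractAt, Finset.sum_mul, map_mul]
  rw [Finset.sum_comm]
  exact Finset.sum_congr rfl fun g _ => Finset.sum_congr rfl fun i _ => by ring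

theorem norm_contractAt_sq (u : EuclideanSpace ℂ (Fin p)) (μ : EuclideanSpace ℂ (Fin n → Fin p)) :
    ((‖contractAt r u μ‖ ^ 2 : ℝ) : ℂ) = star ⇑u ⬝ᵥ reducedDensityMatrixAt r μ *ᵥ ⇑u := by
  push_cast
  refine (inner_self_eq_norm_sq_to_K (contractAt r u μ)).symm.trans ?_
  simp only [PiLp.inner_apply, RCLike.inner_apply, contractAt, reducedDensityMatrixAt,
    dotProduct, mulVec, Matrix.of_apply, map_sum, map_mul, Complex.conj_conj, Finset.sum_mul,
    Finset.mul_sum, Pi.star_apply, RCLike.star_def]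
  rw [Finset.sum_comm]
  conv_rhs => rw [Finset.sum_comm]
  refine Finset.sum_congr rfl fun j _ => ?_
  rw [Finset.sum_comm]
  exact Finset.sum_congr rfl fun i _ => Finset.sum_congr rfl fun g _ => by ring

theorem sum_sq_norm_inner_tensAt_left (u : EuclideanSpace ℂ (Fin p))
    {w : ({s : Fin n // s ≠ r} → Fin p) → EuclideanSpace ℂ ({s : Fin n // s ≠ r} → Fin p)}
    (hw : Orthonormal ℂ w) (μ : EuclideanSpace ℂ (Fin n → Fin p)) :
    ∑ g, ‖⟪tensAt r u (w g), μ⟫‖ ^ 2 = ‖contractAt r u μ‖ ^ 2 := by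
  simp only [inner_tensAt_left]
  exact hw.sum_sq_norm_inner_right (by simp) _

theorem sum_sq_norm_inner_tensAt_tensAt (u u' : EuclideanSpace ℂ (Fin p))
    (y : EuclideanSpace ℂ ({s : Fin n // s ≠ r} → Fin p))
    {w : ({s : Fin n // s ≠ r} → Fin p) → EuclideanSpace ℂ ({s : Fin n // s ≠ r} → Fin p)}
    (hw : Orthonormal ℂ w) :
    ∑ g, ‖⟪tensAt r u y, tensAt r u' (w g)⟫‖ ^ 2 = ‖⟪u, u'⟫‖ ^ 2 * ‖y‖ ^ 2 := by
  simp only [inner_tensAt_tensAt, norm_mul, mul_pow, ← Finset.mul_sum, norm_inner_symm y]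
  rw [hw.sum_sq_norm_inner_right (by simp) y]

theorem card_rest_mul_one_div_card (hp : p ≠ 0) :
    (Fintype.card ({s : Fin n // s ≠ r} → Fin p) : ℝ) * (1 / ((p ^ n : ℕ) : ℝ)) = 1 / p := by
  have hpow : (p : ℝ) ^ n = p ^ (n - 1) * p := by rw [← pow_succ, Nat.sub_add_cancel r.pos]
  simp only [Fintype.card_fun, Fintype.card_fin, Fintype.card_subtype_compl,
    Fintype.card_subtype_eq]
  push_cast
  rw [hpow]
  field_simp

end Bipartition

theorem vector_MU_to_maximal_product_set_maximally_entangled_all_bipartitions_general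
    {p n : ℕ} (hp : p.Prime)
    (ψ : Fin (p + 1) → Fin (p ^ n) → Fin n → EuclideanSpace ℂ (Fin p))
    (hMU : ∀ b b', b ≠ b' → ∀ i j,
      ‖⟪eprodPi (ψ b i), eprodPi (ψ b' j)⟫‖ ^ 2 = 1 / ((p ^ n : ℕ) : ℝ))
    (hstruct : ∀ (r : Fin n) (b : Fin (p + 1)),
      ∃ (v : Fin p → EuclideanSpace ℂ (Fin p))
        (w : Fin p → ({s : Fin n // s ≠ r} → Fin p) →
          EuclideanSpace ℂ ({s : Fin n // s ≠ r} → Fin p))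
        (σ : Fin (p ^ n) ≃ Fin p × (({s : Fin n // s ≠ r} → Fin p))),
        Orthonormal ℂ v ∧ (∀ x, Orthonormal ℂ (w x)) ∧
        ∀ i, eprodPi (ψ b i) = tensAt r (v (σ i).1) (w (σ i).1 (σ i).2))
    (μ : EuclideanSpace ℂ (Fin n → Fin p))
    (hμMU : ∀ b i, ‖⟪eprodPi (ψ b i), μ⟫‖ ^ 2 = 1 / ((p ^ n : ℕ) : ℝ)) :
    ∀ r : Fin n,
      reducedDensityMatrixAt r μ = ((p : ℂ))⁻¹ • (1 : Matrix (Fin p) (Fin p) ℂ) := by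
  intro r
  choose v w σ hv hw hvw using hstruct r
  have hψ : ∀ b x g, eprodPi (ψ b ((σ b).symm (x, g))) = tensAt r (v b x) (w b x g) :=
    fun b x g => by simpa using hvw b ((σ b).symm (x, g))
  have hdiag : ∀ b x, ‖contractAt r (v b x) μ‖ ^ 2 = 1 / p := fun b x => by
    rw [← sum_sq_norm_inner_tensAt_left r _ (hw b x), ← card_rest_mul_one_div_card r hp.ne_zero]
    simp [← hψ, hμMU]
  -- Parseval over the basis `b'`, applied to a single vector `v b x ⊗ w b x g` of the basis `b`.
  have hvMU : ∀ b b', b ≠ b' → ∀ x x', ‖⟪v b x, v b' x'⟫‖ ^ 2 = 1 / p := fun b b' hb x x' => by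
    have h := sum_sq_norm_inner_tensAt_tensAt r (v b x) (v b' x') (w b x fun _ => x) (hw b' x')
    rw [(hw b x).1, one_pow, mul_one] at h
    rw [← h, ← card_rest_mul_one_div_card r hp.ne_zero]
    simp [← hψ, hMU b b' hb]
  refine Matrix.eq_of_quadForm_eq_on_mutuallyUnbiased hv hvMU fun b x => ?_
  have hunit : star ⇑(v b x) ⬝ᵥ ⇑(v b x) = 1 := by
    rw [dotProduct_comm, ← EuclideanSpace.inner_eq_star_dotProduct,
      inner_self_eq_norm_sq_to_K, (hv b).1 x]
    simp
  rw [← norm_contractAt_sq, hdiag, smul_mulVec, one_mulVec, dotProduct_smul, hunit]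
  simp

/-- Let `d = pⁿ`, `p` prime, `n ≥ 2`, and let `B₀, …, B_p` be `p + 1` pairwise mutually
unbiased orthonormal product bases of `(ℂ^p)^{⊗n}` such that for every bipartition into
the `r`-th factor and the rest, each basis `B_b` has the form `{v ⊗ w(v, v̄)}` with `{v}`
an orthonormal basis of `ℂ^p` and, for each `v`, `{w(v, ·)}` an orthonormal basis of
`ℂ^{p^{n-1}}`. Any unit vector `μ` mutually unbiased to every `B_b` is maximally
entangled across every bipartition `ℂ^p ⊗ ℂ^{p^{n-1}}`. -/
theorem vector_MU_to_maximal_product_set_maximally_entangled_all_bipartitions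
    {p n : ℕ} (hp : p.Prime) (hn : 2 ≤ n)
    (ψ : Fin (p + 1) → Fin (p ^ n) → Fin n → EuclideanSpace ℂ (Fin p))
    (hψ : ∀ b i r, ‖ψ b i r‖ = 1)
    (hON : ∀ b, Orthonormal ℂ (fun i => eprodPi (ψ b i)))
    (hMU : ∀ b b', b ≠ b' → ∀ i j,
      ‖⟪eprodPi (ψ b i), eprodPi (ψ b' j)⟫‖ ^ 2 = 1 / ((p ^ n : ℕ) : ℝ))
    (hstruct : ∀ (r : Fin n) (b : Fin (p + 1)),
      ∃ (v : Fin p → EuclideanSpace ℂ (Fin p))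
        (w : Fin p → ({s : Fin n // s ≠ r} → Fin p) →
          EuclideanSpace ℂ ({s : Fin n // s ≠ r} → Fin p))
        (σ : Fin (p ^ n) ≃ Fin p × (({s : Fin n // s ≠ r} → Fin p))),
        Orthonormal ℂ v ∧ (∀ x, Orthonormal ℂ (w x)) ∧
        ∀ i, eprodPi (ψ b i) = tensAt r (v (σ i).1) (w (σ i).1 (σ i).2))
    (μ : EuclideanSpace ℂ (Fin n → Fin p)) (hμ : ‖μ‖ = 1)
    (hμMU : ∀ b i, ‖⟪eprodPi (ψ b i), μ⟫‖ ^ 2 = 1 / ((p ^ n : ℕ) : ℝ)) :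
    ∀ r : Fin n,
      reducedDensityMatrixAt r μ = ((p : ℂ))⁻¹ • (1 : Matrix (Fin p) (Fin p) ℂ) :=
  vector_MU_to_maximal_product_set_maximally_entangled_all_bipartitions_general hp ψ hMU hstruct μ
    hμMU
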